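/- The Black–Scholes formula 𝒱_BS(s,t) = s Φ(d₁) - K e^{-μ(T-t)} Φ(d₂), with d_{1,2} = (ln(s/K) + (μ ± σ²/2)(T-t))/(σ√(T-t)), satisfies the PDE ∂_t 𝒱 + (σ²/2)s²∂²_s 𝒱 + μ s ∂_s 𝒱 - μ𝒱 = 0 for all s > 0 and t < T. -/
import Mathlib

open Real MeasureTheory

lemma gauss_integrable' : Integrable (fun ξ : ℝ => Real.exp (-ξ ^ 2 / 2)) := by
  have h := integrable_exp_neg_mul_sq (by norm_num : (0:ℝ) < 1/2)
  have : (fun ξ : ℝ => Real.exp (-ξ ^ 2 / 2)) = fun x : ℝ => Real.exp (-(1/2) * x ^ 2) := by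
    funext x; ring_nf
  rwa [this]

lemma Phi_deriv' (Φ : ℝ → ℝ)
    (hΦ : ∀ d, Φ d = (Real.sqrt (2 * π))⁻¹ * ∫ ξ in Set.Iic d, Real.exp (-ξ ^ 2 / 2)) :
    ∀ x : ℝ, HasDerivAt Φ ((Real.sqrt (2 * π))⁻¹ * Real.exp (-x ^ 2 / 2)) x := by
  intro x
  have hcont : Continuous fun ξ : ℝ => Real.exp (-ξ ^ 2 / 2) := by continuity
  have key : Φ = fun y => (Real.sqrt (2 * π))⁻¹ *
      ((∫ ξ in Set.Iic (0:ℝ), Real.exp (-ξ ^ 2 / 2)) + ∫ ξ in (0:ℝ)..y, Real.exp (-ξ ^ 2 / 2)) := by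
    funext y
    rw [hΦ]
    congr 1
    rw [← intervalIntegral.integral_Iic_sub_Iic (gauss_integrable'.integrableOn)
      (gauss_integrable'.integrableOn)]
    ring
  rw [key]
  have h1 : HasDerivAt (fun y => ∫ ξ in (0:ℝ)..y, Real.exp (-ξ ^ 2 / 2))
      (Real.exp (-x ^ 2 / 2)) x :=
    intervalIntegral.integral_hasDerivAt_right (gauss_integrable'.intervalIntegrable)
      (hcont.stronglyMeasurable.stronglyMeasurableAtFilter) hcont.continuousAt
  exact ((h1.const_add _).const_mul _)

theorem black_scholes_pde (K σ μ T : ℝ) (hK : 0 < K) (hσ : 0 < σ) (hT : 0 < T)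
    (Φ : ℝ → ℝ)
    (hΦ : ∀ d, Φ d = (Real.sqrt (2 * π))⁻¹ * ∫ ξ in Set.Iic d, Real.exp (-ξ ^ 2 / 2))
    (d₁ d₂ : ℝ → ℝ → ℝ)
    (hd₁ : ∀ s t, d₁ s t = (Real.log (s / K) + (μ + σ ^ 2 / 2) * (T - t)) / (σ * Real.sqrt (T - t)))
    (hd₂ : ∀ s t, d₂ s t = (Real.log (s / K) + (μ - σ ^ 2 / 2) * (T - t)) / (σ * Real.sqrt (T - t)))
    (V : ℝ → ℝ → ℝ)
    (hV : ∀ s t, V s t = s * Φ (d₁ s t) - K * Real.exp (-μ * (T - t)) * Φ (d₂ s t)) :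
    ∀ s t : ℝ, 0 < s → t < T →
      deriv (fun τ => V s τ) t
        + σ ^ 2 / 2 * s ^ 2 * deriv (deriv (fun x => V x t)) s
        + μ * s * deriv (fun x => V x t) s
        - μ * V s t = 0 := by
  intro s t hs ht
  have hΦd := Phi_deriv' Φ hΦ
  have hτ : 0 < T - t := sub_pos.mpr ht
  have hq : 0 < Real.sqrt (T - t) := Real.sqrt_pos.mpr hτ
  have hq2 : Real.sqrt (T - t) ^ 2 = T - t := Real.sq_sqrt hτ.le
  have hr : σ * Real.sqrt (T - t) ≠ 0 := (mul_pos hσ hq).ne'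
  set c : ℝ := (Real.sqrt (2 * π))⁻¹ with hc
  -- key identity
  have hkey : ∀ x : ℝ, 0 < x →
      x * (c * Real.exp (-(d₁ x t) ^ 2 / 2)) =
        K * Real.exp (-μ * (T - t)) * (c * Real.exp (-(d₂ x t) ^ 2 / 2)) := by
    intro x hx
    have hsq : (d₁ x t) ^ 2 = (d₂ x t) ^ 2 + 2 * (Real.log x - Real.log K + μ * (T - t)) := by
      rw [hd₁, hd₂, Real.log_div hx.ne' hK.ne', div_pow, div_pow]
      rw [mul_pow, hq2]
      field_simp
      ring
    have e1 : Real.exp (-(d₁ x t) ^ 2 / 2) =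
        Real.exp (-(d₂ x t) ^ 2 / 2) * (K / x) * Real.exp (-μ * (T - t)) := by
      rw [← Real.exp_log (div_pos hK hx), ← Real.exp_add, ← Real.exp_add]
      congr 1
      rw [hsq, Real.log_div hK.ne' hx.ne']
      ring
    rw [e1]
    field_simp
  -- spatial derivative of d₁, d₂
  have hd1s : ∀ x : ℝ, 0 < x → HasDerivAt (fun y => d₁ y t)
      (x⁻¹ * (σ * Real.sqrt (T - t))⁻¹) x := by
    intro x hx
    have hg : HasDerivAt
        (fun y => (Real.log y + ((μ + σ ^ 2 / 2) * (T - t) - Real.log K)) * (σ * Real.sqrt (T - t))⁻¹)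
        (x⁻¹ * (σ * Real.sqrt (T - t))⁻¹) x :=
      ((Real.hasDerivAt_log hx.ne').add_const _).mul_const _
    refine hg.congr_of_eventuallyEq ?_
    filter_upwards [isOpen_Ioi.mem_nhds hx] with y hy
    rw [hd₁, Real.log_div (ne_of_gt hy) hK.ne', div_eq_mul_inv]
    ring
  have hd2s : ∀ x : ℝ, 0 < x → HasDerivAt (fun y => d₂ y t)
      (x⁻¹ * (σ * Real.sqrt (T - t))⁻¹) x := by
    intro x hx
    have hg : HasDerivAt
        (fun y => (Real.log y + ((μ - σ ^ 2 / 2) * (T - t) - Real.log K)) * (σ * Real.sqrt (T - t))⁻¹)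
        (x⁻¹ * (σ * Real.sqrt (T - t))⁻¹) x :=
      ((Real.hasDerivAt_log hx.ne').add_const _).mul_const _
    refine hg.congr_of_eventuallyEq ?_
    filter_upwards [isOpen_Ioi.mem_nhds hx] with y hy
    rw [hd₂, Real.log_div (ne_of_gt hy) hK.ne', div_eq_mul_inv]
    ring
  -- first spatial derivative of V
  have hVs : ∀ x : ℝ, 0 < x → HasDerivAt (fun y => V y t) (Φ (d₁ x t)) x := by
    intro x hx
    have h1 : HasDerivAt (fun y => Φ (d₁ y t))
        (c * Real.exp (-(d₁ x t) ^ 2 / 2) * (x⁻¹ * (σ * Real.sqrt (T - t))⁻¹)) x :=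
      (hΦd _).comp x (hd1s x hx)
    have h2 : HasDerivAt (fun y => Φ (d₂ y t))
        (c * Real.exp (-(d₂ x t) ^ 2 / 2) * (x⁻¹ * (σ * Real.sqrt (T - t))⁻¹)) x :=
      (hΦd _).comp x (hd2s x hx)
    have h3 : HasDerivAt (fun y => y * Φ (d₁ y t))
        (1 * Φ (d₁ x t) + x * (c * Real.exp (-(d₁ x t) ^ 2 / 2) * (x⁻¹ * (σ * Real.sqrt (T - t))⁻¹)))
        x := (hasDerivAt_id x).mul h1
    have h4 : HasDerivAt (fun y => V y t)
        (1 * Φ (d₁ x t) + x * (c * Real.exp (-(d₁ x t) ^ 2 / 2) * (x⁻¹ * (σ * Real.sqrt (T - t))⁻¹))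
          - K * Real.exp (-μ * (T - t)) *
            (c * Real.exp (-(d₂ x t) ^ 2 / 2) * (x⁻¹ * (σ * Real.sqrt (T - t))⁻¹))) x := by
      have hfun : (fun y => V y t)
          = fun y => y * Φ (d₁ y t) - K * Real.exp (-μ * (T - t)) * Φ (d₂ y t) :=
        funext fun y => hV y t
      rw [hfun]
      exact h3.sub (h2.const_mul _)
    convert h4 using 1
    linear_combination (-(x⁻¹ * (σ * Real.sqrt (T - t))⁻¹)) * hkey x hx
  have hder1 : deriv (fun x => V x t) s = Φ (d₁ s t) := (hVs s hs).deriv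
  have hder2 : deriv (deriv (fun x => V x t)) s
      = c * Real.exp (-(d₁ s t) ^ 2 / 2) * (s⁻¹ * (σ * Real.sqrt (T - t))⁻¹) := by
    have hEE : deriv (fun x => V x t) =ᶠ[nhds s] fun x => Φ (d₁ x t) := by
      filter_upwards [isOpen_Ioi.mem_nhds hs] with y hy
      exact (hVs y hy).deriv
    rw [hEE.deriv_eq]
    exact ((hΦd _).comp s (hd1s s hs)).deriv
  -- time derivative
  have hu : HasDerivAt (fun t' : ℝ => T - t') (-1) t := by
    simpa using (hasDerivAt_id t).const_sub T
  have hsq' : HasDerivAt (fun t' => Real.sqrt (T - t'))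
      (1 / (2 * Real.sqrt (T - t)) * (-1)) t :=
    (Real.hasDerivAt_sqrt hτ.ne').comp t hu
  have hden : HasDerivAt (fun t' => σ * Real.sqrt (T - t'))
      (σ * (1 / (2 * Real.sqrt (T - t)) * (-1))) t := hsq'.const_mul σ
  have hd1t : HasDerivAt (fun t' => d₁ s t')
      (((μ + σ ^ 2 / 2) * (-1) * (σ * Real.sqrt (T - t))
        - (Real.log (s / K) + (μ + σ ^ 2 / 2) * (T - t)) * (σ * (1 / (2 * Real.sqrt (T - t)) * (-1))))
        / (σ * Real.sqrt (T - t)) ^ 2) t := by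
    have hnum : HasDerivAt (fun t' => Real.log (s / K) + (μ + σ ^ 2 / 2) * (T - t'))
        ((μ + σ ^ 2 / 2) * (-1)) t := (hu.const_mul _).const_add _
    have hfun : (fun t' => d₁ s t') = fun t' =>
        (Real.log (s / K) + (μ + σ ^ 2 / 2) * (T - t')) / (σ * Real.sqrt (T - t')) :=
      funext fun t' => hd₁ s t'
    rw [hfun]
    exact hnum.div hden hr
  have hd2t : HasDerivAt (fun t' => d₂ s t')
      (((μ - σ ^ 2 / 2) * (-1) * (σ * Real.sqrt (T - t))
        - (Real.log (s / K) + (μ - σ ^ 2 / 2) * (T - t)) * (σ * (1 / (2 * Real.sqrt (T - t)) * (-1))))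
        / (σ * Real.sqrt (T - t)) ^ 2) t := by
    have hnum : HasDerivAt (fun t' => Real.log (s / K) + (μ - σ ^ 2 / 2) * (T - t'))
        ((μ - σ ^ 2 / 2) * (-1)) t := (hu.const_mul _).const_add _
    have hfun : (fun t' => d₂ s t') = fun t' =>
        (Real.log (s / K) + (μ - σ ^ 2 / 2) * (T - t')) / (σ * Real.sqrt (T - t')) :=
      funext fun t' => hd₂ s t'
    rw [hfun]
    exact hnum.div hden hr
  have hPhi1t : HasDerivAt (fun t' => Φ (d₁ s t'))
      (c * Real.exp (-(d₁ s t) ^ 2 / 2) *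
        (((μ + σ ^ 2 / 2) * (-1) * (σ * Real.sqrt (T - t))
          - (Real.log (s / K) + (μ + σ ^ 2 / 2) * (T - t)) * (σ * (1 / (2 * Real.sqrt (T - t)) * (-1))))
          / (σ * Real.sqrt (T - t)) ^ 2)) t := (hΦd _).comp t hd1t
  have hPhi2t : HasDerivAt (fun t' => Φ (d₂ s t'))
      (c * Real.exp (-(d₂ s t) ^ 2 / 2) *
        (((μ - σ ^ 2 / 2) * (-1) * (σ * Real.sqrt (T - t))
          - (Real.log (s / K) + (μ - σ ^ 2 / 2) * (T - t)) * (σ * (1 / (2 * Real.sqrt (T - t)) * (-1))))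
          / (σ * Real.sqrt (T - t)) ^ 2)) t := (hΦd _).comp t hd2t
  have hexp : HasDerivAt (fun t' => Real.exp (-μ * (T - t')))
      (Real.exp (-μ * (T - t)) * (-μ * -1)) t := (hu.const_mul (-μ)).exp
  have hVt : HasDerivAt (fun τ' => V s τ')
      (s * (c * Real.exp (-(d₁ s t) ^ 2 / 2) *
        (((μ + σ ^ 2 / 2) * (-1) * (σ * Real.sqrt (T - t))
          - (Real.log (s / K) + (μ + σ ^ 2 / 2) * (T - t)) * (σ * (1 / (2 * Real.sqrt (T - t)) * (-1))))
          / (σ * Real.sqrt (T - t)) ^ 2))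
        - (K * (Real.exp (-μ * (T - t)) * (-μ * -1)) * Φ (d₂ s t)
          + K * Real.exp (-μ * (T - t)) *
            (c * Real.exp (-(d₂ s t) ^ 2 / 2) *
              (((μ - σ ^ 2 / 2) * (-1) * (σ * Real.sqrt (T - t))
                - (Real.log (s / K) + (μ - σ ^ 2 / 2) * (T - t)) *
                  (σ * (1 / (2 * Real.sqrt (T - t)) * (-1))))
                / (σ * Real.sqrt (T - t)) ^ 2)))) t := by
    have hfun : (fun τ' => V s τ')
        = fun τ' => s * Φ (d₁ s τ') - K * Real.exp (-μ * (T - τ')) * Φ (d₂ s τ') :=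
      funext fun τ' => hV s τ'
    rw [hfun]
    exact (hPhi1t.const_mul s).sub ((hexp.const_mul K).mul hPhi2t)
  rw [hVt.deriv, hder1, hder2, hV s t]
  have hk := hkey s hs
  have hσ' : σ ≠ 0 := hσ.ne'
  have hq' : Real.sqrt (T - t) ≠ 0 := hq.ne'
  have hs' : s ≠ 0 := hs.ne'
  have hK' : K ≠ 0 := hK.ne'
  have hE' : Real.exp (-μ * (T - t)) ≠ 0 := Real.exp_ne_zero _
  have hc0 : c ≠ 0 := by
    rw [hc]
    exact inv_ne_zero (Real.sqrt_ne_zero'.mpr (by positivity))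
  have h' : c * (s * Real.exp (-(d₁ s t) ^ 2 / 2))
      = c * (K * Real.exp (-μ * (T - t)) * Real.exp (-(d₂ s t) ^ 2 / 2)) := by
    linear_combination hk
  have h'' := mul_left_cancel₀ hc0 h'
  have he2 : Real.exp (-(d₂ s t) ^ 2 / 2)
      = s * Real.exp (-(d₁ s t) ^ 2 / 2) / (K * Real.exp (-μ * (T - t))) := by
    rw [eq_div_iff (mul_ne_zero hK' hE')]
    linear_combination -h''
  rw [he2]
  set q := Real.sqrt (T - t) with hqd
  rw [show T - t = q ^ 2 from hq2.symm]
  field_simp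
  ring
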